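/- Let x be a nonzero element of an algebraic closure of F_7 and let f(x) = 4x^{10} + x^7 + 2x^4 + 5x. Then x^{14}·f(x^{-2}) + x^{-14}·f(x^2) = 0 if and only if x^6 = -1. -/

import Mathlib

/-!
Multiplying out, x ^ 12 times the sum is the palindromic polynomial 5u⁴ + 6u³ + 2u² + 6u + 5 in
u = x ^ 6, and in characteristic 7 this is 5 (u + 1) ^ 4, because 5 · (1, 4, 6, 4, 1) ≡ (5, 6, 2, 6, 5)
mod 7. So for x ≠ 0 the sum vanishes exactly when u = -1.
-/

instance : Fact (Nat.Prime 7) := ⟨by norm_num⟩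

def f {R : Type*} [Semiring R] (t : R) : R := 4 * t ^ 10 + t ^ 7 + 2 * t ^ 4 + 5 * t

lemma pow_mul_f_inv_sq_add_inv_pow_mul_f_sq {K : Type*} [Field K] (x : K) :
    x ^ 14 * f (x⁻¹ ^ 2) + x⁻¹ ^ 14 * f (x ^ 2)
      = x⁻¹ ^ 12 * (5 * (x ^ 6) ^ 4 + 6 * (x ^ 6) ^ 3 + 2 * (x ^ 6) ^ 2 + 6 * x ^ 6 + 5) := by
  rcases eq_or_ne x 0 with rfl | hx
  · simp [f]
  · simp only [f]
    field_simp
    ring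

lemma five_mul_add_one_pow_four {R : Type*} [CommRing R] [CharP R 7] (u : R) :
    5 * (u + 1) ^ 4 = 5 * u ^ 4 + 6 * u ^ 3 + 2 * u ^ 2 + 6 * u + 5 := by
  have h7 : (7 : R) = 0 := by exact_mod_cast CharP.cast_eq_zero R 7
  linear_combination (2 * u ^ 3 + 4 * u ^ 2 + 2 * u) * h7

lemma five_ne_zero_of_charP_seven {R : Type*} [AddMonoidWithOne R] [CharP R 7] : (5 : R) ≠ 0 := by
  rw [← Nat.cast_ofNat, Ne, CharP.cast_eq_zero_iff R 7]
  norm_num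

theorem pow_mul_f_inv_sq_add_inv_pow_mul_f_sq_eq_zero_iff {K : Type*} [Field K] [CharP K 7]
    (x : K) (hx : x ≠ 0) :
    x ^ 14 * f (x⁻¹ ^ 2) + x⁻¹ ^ 14 * f (x ^ 2) = 0 ↔ x ^ 6 = -1 := by
  rw [pow_mul_f_inv_sq_add_inv_pow_mul_f_sq, ← five_mul_add_one_pow_four,
    mul_eq_zero, or_iff_right (pow_ne_zero _ (inv_ne_zero hx)), mul_eq_zero,
    or_iff_right five_ne_zero_of_charP_seven, pow_eq_zero_iff four_ne_zero, add_eq_zero_iff_eq_neg]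

theorem stmt_2 (x : AlgebraicClosure (ZMod 7)) (hx : x ≠ 0) :
    x ^ 14 * (4 * (x⁻¹ ^ 2) ^ 10 + (x⁻¹ ^ 2) ^ 7 + 2 * (x⁻¹ ^ 2) ^ 4 + 5 * (x⁻¹ ^ 2))
      + (x⁻¹) ^ 14 * (4 * (x ^ 2) ^ 10 + (x ^ 2) ^ 7 + 2 * (x ^ 2) ^ 4 + 5 * (x ^ 2)) = 0
      ↔ x ^ 6 = -1 :=
  pow_mul_f_inv_sq_add_inv_pow_mul_f_sq_eq_zero_iff x hx
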